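/- arXiv:2412.10646 — 2 statements merged into one kernel-verified Lean document; each statement's English description precedes it below -/
import Mathlib

section
/- Let F ⊆ ℤ be a finite set with min F = 0. Then F tiles ℤ by translations if and only if there exists a finite set A ⊆ {0,…,N} such that F ⊕ A is a complete residue system mod N for some N ≤ 2^(max F); in particular, translational tiling of ℤ¹ by a single tile is decidable. -/
/-- Decidability of translational tiling of `ℤ` by one tile, in concrete form:
a finite tile `F ⊆ ℤ` with `min F = 0` tiles `ℤ` by translations if and only if
there is a period `N ≤ 2^(max F)` and a finite complement `A ⊆ {0,…,N−1}` such
that `F ⊕ A` is a complete residue system modulo `N`. -/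
theorem one_dim_tiling_decidable_criterion (F : Finset ℤ) (h0 : F.Nonempty)
    (hmin : F.min' h0 = 0) :
    (∃ T : Set ℤ, ∀ x : ℤ, ∃! t, t ∈ T ∧ x - t ∈ F) ↔
    ∃ N : ℕ, 0 < N ∧ (N : ℤ) ≤ 2 ^ (F.max' h0).toNat ∧
      ∃ A : Finset ℤ, (∀ a ∈ A, 0 ≤ a ∧ a < (N : ℤ)) ∧
        ∀ x : ℤ, ∃! p : ℤ × ℤ, p.1 ∈ F ∧ p.2 ∈ A ∧ (x - p.1 - p.2) % (N : ℤ) = 0 := by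
  classical
  constructor
  · rintro ⟨T, hT⟩
    set D : ℕ := (F.max' h0).toNat with hDdef
    have h0F : (0:ℤ) ∈ F := by rw [← hmin]; exact F.min'_mem h0
    have hmaxnn : (0:ℤ) ≤ F.max' h0 := by exact hmin ▸ F.min'_le _ (F.max'_mem h0)
    have hmax : F.max' h0 = (D : ℤ) := (Int.toNat_of_nonneg hmaxnn).symm
    have hDF : ((D:ℤ)) ∈ F := by rw [← hmax]; exact F.max'_mem h0
    have hFub : ∀ f ∈ F, 0 ≤ f ∧ f ≤ (D:ℤ) := fun f hf =>
      ⟨by rw [← hmin]; exact F.min'_le f hf, by rw [← hmax]; exact F.le_max' f hf⟩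
    -- forward characterization of membership in T
    have fwd : ∀ n : ℤ, (n ∈ T ↔ ∀ t ∈ T, t < n → n - t ∉ F) := by
      intro n
      obtain ⟨t₀, ⟨ht₀T, ht₀F⟩, huniq⟩ := hT n
      constructor
      · intro hn t ht htn hF
        have h1 : t = t₀ := huniq t ⟨ht, hF⟩
        have h2 : n = t₀ := huniq n ⟨hn, by simpa using h0F⟩
        omega
      · intro h
        have hb := hFub _ ht₀F
        rcases eq_or_lt_of_le (by omega : t₀ ≤ n) with he | hl
        · rwa [← he]
        · exact absurd ht₀F (h t₀ ht₀T hl)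
    -- backward characterization of membership in T
    have bwd : ∀ n : ℤ, (n ∈ T ↔ ∀ t ∈ T, n < t → n + D - t ∉ F) := by
      intro n
      obtain ⟨t₀, ⟨ht₀T, ht₀F⟩, huniq⟩ := hT (n + D)
      constructor
      · intro hn t ht hnt hF
        have h1 : t = t₀ := huniq t ⟨ht, hF⟩
        have h2 : n = t₀ := huniq n ⟨hn, by simpa using hDF⟩
        omega
      · intro h
        have hb := hFub _ ht₀F
        rcases eq_or_lt_of_le (by omega : n ≤ t₀) with he | hl
        · rwa [he]
        · exact absurd ht₀F (h t₀ ht₀T hl)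
    -- equality of windows of length D
    set E : ℤ → ℤ → Prop :=
      fun n m => ∀ k : ℤ, 0 ≤ k → k < D → ((n + k) ∈ T ↔ (m + k) ∈ T) with hEdef
    -- window determines the next point
    have stepF : ∀ n m : ℤ, E n m → ((n + D) ∈ T ↔ (m + D) ∈ T) := by
      have key : ∀ n m : ℤ, E n m → (∀ t ∈ T, t < n + D → n + D - t ∉ F) →
          (∀ t ∈ T, t < m + D → m + D - t ∉ F) := by
        intro n m hE' hn t ht htm hF
        have hb := hFub _ hF
        have h1 : (n + (t - m)) ∈ T :=
          (hE' (t - m) (by omega) (by omega)).mpr (by rwa [show m + (t - m) = t by ring])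
        exact hn (n + (t - m)) h1 (by omega)
          (by rw [show n + (D:ℤ) - (n + (t - m)) = m + D - t by ring]; exact hF)
      intro n m hE'
      have hE'' : E m n := fun k h1 h2 => (hE' k h1 h2).symm
      rw [fwd (n + D), fwd (m + D)]
      exact ⟨key n m hE', key m n hE''⟩
    -- window determines the previous point
    have stepB : ∀ n m : ℤ, E n m → ((n - 1) ∈ T ↔ (m - 1) ∈ T) := by
      have key : ∀ n m : ℤ, E n m → (∀ t ∈ T, n - 1 < t → n - 1 + D - t ∉ F) →
          (∀ t ∈ T, m - 1 < t → m - 1 + D - t ∉ F) := by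
        intro n m hE' hn t ht htm hF
        have hb := hFub _ hF
        have h1 : (n + (t - m)) ∈ T :=
          (hE' (t - m) (by omega) (by omega)).mpr (by rwa [show m + (t - m) = t by ring])
        exact hn (n + (t - m)) h1 (by omega)
          (by rw [show n - 1 + (D:ℤ) - (n + (t - m)) = m - 1 + D - t by ring]; exact hF)
      intro n m hE'
      have hE'' : E m n := fun k h1 h2 => (hE' k h1 h2).symm
      rw [bwd (n - 1), bwd (m - 1)]
      exact ⟨key n m hE', key m n hE''⟩
    -- window equality propagates
    have stepE : ∀ n m : ℤ, E n m → E (n + 1) (m + 1) := by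
      intro n m h k hk0 hkD
      rcases eq_or_lt_of_le (by omega : k + 1 ≤ (D:ℤ)) with he | hl
      · rw [show n + 1 + k = n + (D:ℤ) by omega, show m + 1 + k = m + (D:ℤ) by omega]
        exact stepF n m h
      · rw [show n + 1 + k = n + (k + 1) by ring, show m + 1 + k = m + (k + 1) by ring]
        exact h (k + 1) (by omega) (by omega)
    have stepE' : ∀ n m : ℤ, E n m → E (n - 1) (m - 1) := by
      intro n m h k hk0 hkD
      rcases eq_or_lt_of_le hk0 with he | hl
      · rw [show n - 1 + k = n - 1 by omega, show m - 1 + k = m - 1 by omega]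
        exact stepB n m h
      · rw [show n - 1 + k = n + (k - 1) by ring, show m - 1 + k = m + (k - 1) by ring]
        exact h (k - 1) (by omega) (by omega)
    -- pigeonhole: two equal windows among positions 0..2^D
    obtain ⟨p, hp0, hp2, hper⟩ : ∃ p : ℤ, 0 < p ∧ p ≤ 2 ^ D ∧ ∀ n : ℤ, n ∈ T ↔ (n + p) ∈ T := by
      have hcard : Fintype.card (Fin (2 ^ D + 1)) > Fintype.card (Fin D → Bool) := by
        simp
      obtain ⟨i, j, hij, hgij⟩ := Fintype.exists_ne_map_eq_of_card_lt
        (fun i : Fin (2 ^ D + 1) => fun k : Fin D => decide (((i:ℕ):ℤ) + (k:ℕ) ∈ T)) hcard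
      have hEwin : ∀ a b : Fin (2 ^ D + 1),
          ((fun k : Fin D => decide (((a:ℕ):ℤ) + (k:ℕ) ∈ T)) =
            (fun k : Fin D => decide (((b:ℕ):ℤ) + (k:ℕ) ∈ T))) →
          E ((a:ℕ):ℤ) ((b:ℕ):ℤ) := by
        intro a b hab k hk0 hkD
        have h1 := congrFun hab ⟨k.toNat, by omega⟩
        simp only [decide_eq_decide] at h1
        have hk : (((⟨k.toNat, by omega⟩ : Fin D) : ℕ) : ℤ) = k := by simp; omega
        rwa [hk] at h1
      have main : ∀ a b : Fin (2 ^ D + 1), (a : ℕ) < (b : ℕ) → E ((a:ℕ):ℤ) ((b:ℕ):ℤ) →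
          ∃ p : ℤ, 0 < p ∧ p ≤ 2 ^ D ∧ ∀ n : ℤ, n ∈ T ↔ (n + p) ∈ T := by
        intro a b hab hEab
        have hshift : ∀ k : ℤ, E (((a:ℕ):ℤ) + k) (((b:ℕ):ℤ) + k) := by
          intro k
          induction k using Int.induction_on with
          | zero => rw [add_zero, add_zero]; exact hEab
          | succ k ih =>
            have h1 := stepE _ _ ih
            rwa [show ((a:ℕ):ℤ) + k + 1 = ((a:ℕ):ℤ) + ((k:ℤ) + 1) by ring,
              show ((b:ℕ):ℤ) + k + 1 = ((b:ℕ):ℤ) + ((k:ℤ) + 1) by ring] at h1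
          | pred k ih =>
            have h1 := stepE' _ _ ih
            rwa [show ((a:ℕ):ℤ) + (-(k:ℤ)) - 1 = ((a:ℕ):ℤ) + (-(k:ℤ) - 1) by ring,
              show ((b:ℕ):ℤ) + (-(k:ℤ)) - 1 = ((b:ℕ):ℤ) + (-(k:ℤ) - 1) by ring] at h1
        refine ⟨((b:ℕ):ℤ) - ((a:ℕ):ℤ), by omega, ?_, ?_⟩
        · have hb := b.isLt
          have : ((b:ℕ):ℤ) ≤ ((2 ^ D : ℕ) : ℤ) := by exact_mod_cast Nat.lt_succ_iff.mp hb
          push_cast at this ⊢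
          omega
        · intro n
          have h1 := stepF _ _ (hshift (n - D - ((a:ℕ):ℤ)))
          have e1 : ((a:ℕ):ℤ) + (n - D - ((a:ℕ):ℤ)) + D = n := by ring
          have e2 : ((b:ℕ):ℤ) + (n - D - ((a:ℕ):ℤ)) + D = n + (((b:ℕ):ℤ) - ((a:ℕ):ℤ)) := by
            ring
          rwa [e1, e2] at h1
      rcases Ne.lt_or_gt hij with hlt | hlt
      · exact main i j hlt (hEwin i j hgij)
      · exact main j i hlt (hEwin j i hgij.symm)
    -- periodicity with arbitrary integer multiples
    have hperZ : ∀ n k : ℤ, n ∈ T ↔ (n + k * p) ∈ T := by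
      intro n k
      induction k using Int.induction_on with
      | zero => simp
      | succ k ih =>
        rw [show n + ((k:ℤ) + 1) * p = (n + k * p) + p by ring]
        exact ih.trans (hper _)
      | pred k ih =>
        have h1 := hper (n + (-(k:ℤ) - 1) * p)
        rw [show n + (-(k:ℤ) - 1) * p + p = n + (-(k:ℤ)) * p by ring] at h1
        exact ih.trans h1.symm
    -- assemble the answer
    refine ⟨p.toNat, by omega, ?_, (Finset.Ico (0:ℤ) p).filter (· ∈ T), ?_, ?_⟩
    · rw [show ((p.toNat : ℕ) : ℤ) = p from Int.toNat_of_nonneg hp0.le]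
      exact hp2
    · intro a ha
      simp only [Finset.mem_filter, Finset.mem_Ico] at ha
      exact ⟨ha.1.1, by omega⟩
    · intro x
      obtain ⟨t, ⟨htT, htF⟩, huniq⟩ := hT x
      have hNp : ((p.toNat : ℕ) : ℤ) = p := Int.toNat_of_nonneg hp0.le
      refine ⟨(x - t, t % p), ⟨htF, ?_, ?_⟩, ?_⟩
      · simp only [Finset.mem_filter, Finset.mem_Ico]
        refine ⟨⟨Int.emod_nonneg t (by omega), Int.emod_lt_of_pos t hp0⟩, ?_⟩
        have he : t % p + t / p * p = t := Int.emod_add_ediv_mul t p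
        exact (hperZ (t % p) (t / p)).mpr (by rw [he]; exact htT)
      · rw [hNp]
        have he : t % p + t / p * p = t := Int.emod_add_ediv_mul t p
        have h2 : x - (x - t) - t % p = t / p * p := by linarith
        rw [h2]
        exact Int.mul_emod_left _ _
      · rintro ⟨f, a⟩ ⟨hf, haA, hmod⟩
        simp only [Finset.mem_filter, Finset.mem_Ico] at haA
        obtain ⟨⟨ha0, hap⟩, haT⟩ := haA
        have hmod' : (x - f - a) % p = 0 := by rwa [hNp] at hmod
        obtain ⟨k, hk⟩ : p ∣ x - f - a := Int.dvd_of_emod_eq_zero hmod'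
        have ht' : (x - f) ∈ T := by
          have h1 := (hperZ a k).mp haT
          rwa [show a + k * p = x - f by rw [mul_comm]; linarith] at h1
        have htt : x - f = t := huniq _ ⟨ht', by rw [show x - (x - f) = f by ring]; exact hf⟩
        have hfx : f = x - t := by omega
        have hat : a = t % p := by
          have h7 : t % p = a := by
            rw [show t = a + p * k by linarith, Int.add_mul_emod_self_left]
            exact Int.emod_eq_of_lt ha0 hap
          omega
        simp only [Prod.mk.injEq]
        exact ⟨hfx, hat⟩
  · rintro ⟨N, hN0, _, A, hA, hcomp⟩
    refine ⟨{t : ℤ | ∃ a ∈ A, (t - a) % (N:ℤ) = 0}, ?_⟩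
    intro x
    obtain ⟨⟨f, a⟩, ⟨hfF, haA, hmod⟩, huniq⟩ := hcomp x
    refine ⟨x - f, ⟨⟨a, haA, hmod⟩, by rw [show x - (x - f) = f by ring]; exact hfF⟩, ?_⟩
    rintro t' ⟨⟨a', ha'A, hmod'⟩, hf'⟩
    have h1 : ((x - t' : ℤ), a') = (f, a) := by
      refine huniq (x - t', a') ⟨hf', ha'A, ?_⟩
      rw [show x - (x - t') - a' = t' - a' by ring]
      exact hmod'
    have h2 : x - t' = f := (Prod.mk.injEq _ _ _ _).mp h1 |>.1
    omega
end

section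
/- If a finite tile F ⊆ ℤ tiles ℤ by translations, then every tiling of ℤ by F is eventually determined to the right by any window of length diam(F): two tilings agreeing on an interval of length diam(F) = max F − min F agree on all points to the right of that interval. -/
/-- Any two tilings of `ℤ` by a finite tile `F` which have the same coverage
pattern on an interval of length `diam F = max F − min F` agree on all points to
the right of that interval. -/
theorem tilings_agree_to_the_right (F : Finset ℤ) (hF : F.Nonempty)
    (T₁ T₂ : Set ℤ)
    (h₁ : ∀ x : ℤ, ∃! t, t ∈ T₁ ∧ x - t ∈ F)
    (h₂ : ∀ x : ℤ, ∃! t, t ∈ T₂ ∧ x - t ∈ F)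
    (a : ℤ)
    (hagree : ∀ x ∈ Set.Ico a (a + (F.max' hF - F.min' hF)),
      ∀ t : ℤ, (t ∈ T₁ ∧ x - t ∈ F) ↔ (t ∈ T₂ ∧ x - t ∈ F)) :
    ∀ x : ℤ, a + (F.max' hF - F.min' hF) ≤ x →
      ∀ t : ℤ, (t ∈ T₁ ∧ x - t ∈ F) ↔ (t ∈ T₂ ∧ x - t ∈ F) := by
  set m := F.min' hF with hm
  set M := F.max' hF with hM
  set D := M - m with hD
  -- key step: agreement below x implies agreement at x
  have key : ∀ x : ℤ, a + D ≤ x →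
      (∀ y ∈ Set.Ico a x, ∀ t : ℤ, (t ∈ T₁ ∧ y - t ∈ F) ↔ (t ∈ T₂ ∧ y - t ∈ F)) →
      ∀ t : ℤ, (t ∈ T₁ ∧ x - t ∈ F) ↔ (t ∈ T₂ ∧ x - t ∈ F) := by
    intro x hx hbelow
    obtain ⟨t₁, ht₁, hu₁⟩ := h₁ x
    obtain ⟨t₂, ht₂, hu₂⟩ := h₂ x
    have hmem : m ∈ F := F.min'_mem hF
    -- helper: if s covers x (in either sense) and s + m < x, use agreement at s + m
    have hleft : ∀ s : ℤ, x - s ∈ F → s + m < x → s + m ∈ Set.Ico a x := by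
      intro s hs hlt
      refine ⟨?_, hlt⟩
      have h1 : x - s ≤ M := F.le_max' _ hs
      omega
    have e12 : t₁ = t₂ := by
      have h1m : m ≤ x - t₁ := F.min'_le _ ht₁.2
      have h2m : m ≤ x - t₂ := F.min'_le _ ht₂.2
      by_cases hc1 : t₁ + m < x
      · have hy := hbelow (t₁ + m) (hleft t₁ ht₁.2 hc1) t₁
        have : t₁ ∈ T₂ := by
          have := hy.mp ⟨ht₁.1, by simpa using hmem⟩
          exact this.1
        exact (hu₂ t₁ ⟨this, ht₁.2⟩).symm ▸ rfl
      · by_cases hc2 : t₂ + m < x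
        · have hy := hbelow (t₂ + m) (hleft t₂ ht₂.2 hc2) t₂
          have : t₂ ∈ T₁ := by
            have := hy.mpr ⟨ht₂.1, by simpa using hmem⟩
            exact this.1
          exact hu₁ t₂ ⟨this, ht₂.2⟩ |>.symm
        · omega
    intro t
    constructor
    · rintro ⟨htT, hf⟩
      have := hu₁ t ⟨htT, hf⟩
      subst this
      exact ⟨e12 ▸ ht₂.1, hf⟩
    · rintro ⟨htT, hf⟩
      have := hu₂ t ⟨htT, hf⟩
      subst this
      exact ⟨e12.symm ▸ ht₁.1, hf⟩
  -- strong induction on (x - (a + D)).toNat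
  have main : ∀ n : ℕ, ∀ x : ℤ, a + D ≤ x → (x - (a + D)).toNat = n →
      ∀ t : ℤ, (t ∈ T₁ ∧ x - t ∈ F) ↔ (t ∈ T₂ ∧ x - t ∈ F) := by
    intro n
    induction n using Nat.strong_induction_on with
    | _ n ih =>
      intro x hx hxn
      apply key x hx
      intro y hy t
      rcases lt_or_ge y (a + D) with hy' | hy'
      · exact hagree y ⟨hy.1, hy'⟩ t
      · exact ih (y - (a + D)).toNat (by obtain ⟨hy1, hy2⟩ := hy; omega) y hy' rfl t
  intro x hx
  exact main (x - (a + D)).toNat x hx rfl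
end
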